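/- For −1 < ρ₁ < 0 ≤ ρ₂ < 1, the EWC density with μ₁ = μ₂ = μ can be written as a two-component mixture of wrapped Cauchy densities: f(θ) = p·wc(θ; μ, ρ₁) + (1−p)·wc(θ; μ, ρ₂), where p = −ρ₁(1−ρ₂²)/((1+ρ₁ρ₂)(ρ₂−ρ₁)) and wc(θ; μ, ρ) = (1/2π)(1−ρ²)/(1+ρ²−2ρcos(θ−μ)). Moreover 0 ≤ p ≤ 1. -/

import Mathlib

open Real

/-- The wrapped Cauchy density `WC(μ, ρ)`. -/
noncomputable def wc (θ μ ρ : ℝ) : ℝ :=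
  (1 / (2 * Real.pi)) * (1 - ρ ^ 2) / (1 + ρ ^ 2 - 2 * ρ * Real.cos (θ - μ))

/-! The weight `p` is the unique one for which the numerator of
`p · wc(ρ₁) + (1 - p) · wc(ρ₂)`, over the common denominator, has no `cos (θ - μ)` term;
the remaining constant then matches the EWC normalisation. The two weights
`p = -ρ₁(1-ρ₂²)/((1+ρ₁ρ₂)(ρ₂-ρ₁))` and `1 - p = ρ₂(1-ρ₁²)/((1+ρ₁ρ₂)(ρ₂-ρ₁))`
are visibly nonnegative when `ρ₁ < 0 ≤ ρ₂`. -/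

noncomputable def symmEwcWeight (ρ₁ ρ₂ : ℝ) : ℝ :=
  -ρ₁ * (1 - ρ₂ ^ 2) / ((1 + ρ₁ * ρ₂) * (ρ₂ - ρ₁))

lemma wc_denom_pos {ρ : ℝ} (hρ₁ : -1 < ρ) (hρ₂ : ρ < 1) (x : ℝ) :
    0 < 1 + ρ ^ 2 - 2 * ρ * cos x := by
  rcases le_total 0 ρ with hρ | hρ
  · nlinarith [cos_le_one x, mul_le_mul_of_nonneg_left (cos_le_one x) hρ]
  · nlinarith [neg_one_le_cos x, mul_le_mul_of_nonpos_left (neg_one_le_cos x) hρ]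

section

variable {ρ₁ ρ₂ : ℝ}

lemma one_sub_symmEwcWeight (h : 1 + ρ₁ * ρ₂ ≠ 0) (hne : ρ₁ ≠ ρ₂) :
    1 - symmEwcWeight ρ₁ ρ₂ = ρ₂ * (1 - ρ₁ ^ 2) / ((1 + ρ₁ * ρ₂) * (ρ₂ - ρ₁)) := by
  have : ρ₂ - ρ₁ ≠ 0 := sub_ne_zero.mpr hne.symm
  unfold symmEwcWeight
  field_simp
  ring

lemma symmEwcWeight_nonneg (hρ₁ : -1 < ρ₁) (hρ₁0 : ρ₁ ≤ 0) (hρ₂0 : 0 ≤ ρ₂) (hρ₂ : ρ₂ < 1) :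
    0 ≤ symmEwcWeight ρ₁ ρ₂ := by
  unfold symmEwcWeight
  apply div_nonneg
  · exact mul_nonneg (neg_nonneg.mpr hρ₁0) (by nlinarith)
  · exact mul_nonneg (by nlinarith) (by linarith)

lemma symmEwcWeight_le_one (hρ₁ : -1 < ρ₁) (hρ₁0 : ρ₁ < 0) (hρ₂0 : 0 ≤ ρ₂) (hρ₂ : ρ₂ < 1) :
    symmEwcWeight ρ₁ ρ₂ ≤ 1 := by
  rw [← sub_nonneg, one_sub_symmEwcWeight (by nlinarith) (hρ₁0.trans_le hρ₂0).ne]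
  apply div_nonneg
  · exact mul_nonneg hρ₂0 (by nlinarith)
  · exact mul_nonneg (by nlinarith) (by linarith)

lemma ewc_eq_symmEwcWeight_mixture {θ μ : ℝ} (h : 1 + ρ₁ * ρ₂ ≠ 0) (hne : ρ₁ ≠ ρ₂)
    (hD₁ : 1 + ρ₁ ^ 2 - 2 * ρ₁ * cos (θ - μ) ≠ 0)
    (hD₂ : 1 + ρ₂ ^ 2 - 2 * ρ₂ * cos (θ - μ) ≠ 0) :
    (1 - ρ₁ * ρ₂) / (2 * π * (1 + ρ₁ * ρ₂)) *
        ((1 - ρ₁ ^ 2) / (1 + ρ₁ ^ 2 - 2 * ρ₁ * cos (θ - μ))) *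
        ((1 - ρ₂ ^ 2) / (1 + ρ₂ ^ 2 - 2 * ρ₂ * cos (θ - μ)))
      = symmEwcWeight ρ₁ ρ₂ * wc θ μ ρ₁ + (1 - symmEwcWeight ρ₁ ρ₂) * wc θ μ ρ₂ := by
  have : ρ₂ - ρ₁ ≠ 0 := sub_ne_zero.mpr hne.symm
  rw [one_sub_symmEwcWeight h hne]
  unfold symmEwcWeight wc
  generalize cos (θ - μ) = c at hD₁ hD₂ ⊢
  generalize hE₁ : 1 + ρ₁ ^ 2 - 2 * ρ₁ * c = D₁ at hD₁ ⊢
  generalize hE₂ : 1 + ρ₂ ^ 2 - 2 * ρ₂ * c = D₂ at hD₂ ⊢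
  field_simp
  subst hE₁ hE₂
  ring

end

theorem ewc_symmetric_mixture_general (ρ₁ ρ₂ μ : ℝ)
    (hρ₁ : -1 < ρ₁) (hρ₁0 : ρ₁ < 0) (hρ₂0 : 0 ≤ ρ₂) (hρ₂ : ρ₂ < 1) :
    (∀ θ : ℝ,
      (1 - ρ₁ * ρ₂) / (2 * Real.pi * (1 + ρ₁ * ρ₂)) *
          ((1 - ρ₁ ^ 2) / (1 + ρ₁ ^ 2 - 2 * ρ₁ * Real.cos (θ - μ))) *
          ((1 - ρ₂ ^ 2) / (1 + ρ₂ ^ 2 - 2 * ρ₂ * Real.cos (θ - μ)))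
        = (-ρ₁ * (1 - ρ₂ ^ 2) / ((1 + ρ₁ * ρ₂) * (ρ₂ - ρ₁))) * wc θ μ ρ₁ +
          (1 - -ρ₁ * (1 - ρ₂ ^ 2) / ((1 + ρ₁ * ρ₂) * (ρ₂ - ρ₁))) * wc θ μ ρ₂) ∧
    0 ≤ -ρ₁ * (1 - ρ₂ ^ 2) / ((1 + ρ₁ * ρ₂) * (ρ₂ - ρ₁)) ∧
    -ρ₁ * (1 - ρ₂ ^ 2) / ((1 + ρ₁ * ρ₂) * (ρ₂ - ρ₁)) ≤ 1 := by
  have h : 1 + ρ₁ * ρ₂ ≠ 0 := by nlinarith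
  refine ⟨fun θ => ?_, symmEwcWeight_nonneg hρ₁ hρ₁0.le hρ₂0 hρ₂,
    symmEwcWeight_le_one hρ₁ hρ₁0 hρ₂0 hρ₂⟩
  exact ewc_eq_symmEwcWeight_mixture h (hρ₁0.trans_le hρ₂0).ne
    (wc_denom_pos hρ₁ (by linarith) _).ne' (wc_denom_pos (by linarith) hρ₂ _).ne'

/-- For `-1 < ρ₁ < 0 ≤ ρ₂ < 1`, the symmetric EWC density with `μ₁ = μ₂ = μ` is a
two-component mixture of wrapped Cauchy densities with mixing weight
`p = -ρ₁(1-ρ₂²)/((1+ρ₁ρ₂)(ρ₂-ρ₁)) ∈ [0,1]`. -/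
theorem ewc_symmetric_mixture (ρ₁ ρ₂ μ : ℝ)
    (hρ₁ : -1 < ρ₁) (hρ₁0 : ρ₁ < 0) (hρ₂0 : 0 ≤ ρ₂) (hρ₂ : ρ₂ < 1)
    (hμ : μ ∈ Set.Ico (-Real.pi) Real.pi) :
    (∀ θ : ℝ,
      (1 - ρ₁ * ρ₂) / (2 * Real.pi * (1 + ρ₁ * ρ₂)) *
          ((1 - ρ₁ ^ 2) / (1 + ρ₁ ^ 2 - 2 * ρ₁ * Real.cos (θ - μ))) *
          ((1 - ρ₂ ^ 2) / (1 + ρ₂ ^ 2 - 2 * ρ₂ * Real.cos (θ - μ)))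
        = (-ρ₁ * (1 - ρ₂ ^ 2) / ((1 + ρ₁ * ρ₂) * (ρ₂ - ρ₁))) * wc θ μ ρ₁ +
          (1 - -ρ₁ * (1 - ρ₂ ^ 2) / ((1 + ρ₁ * ρ₂) * (ρ₂ - ρ₁))) * wc θ μ ρ₂) ∧
    0 ≤ -ρ₁ * (1 - ρ₂ ^ 2) / ((1 + ρ₁ * ρ₂) * (ρ₂ - ρ₁)) ∧
    -ρ₁ * (1 - ρ₂ ^ 2) / ((1 + ρ₁ * ρ₂) * (ρ₂ - ρ₁)) ≤ 1 :=
  ewc_symmetric_mixture_general ρ₁ ρ₂ μ hρ₁ hρ₁0 hρ₂0 hρ₂
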